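/- arXiv:1501.07193 — 2 statements merged into one kernel-verified Lean document; each statement's English description precedes it below -/
import Mathlib

section
/- Let τ be an M-topology on M : X → ℕ and let A, B : X → ℕ be sub-M-sets of M. Then bd(A ∪ B) ≤ bd(A) ∪ bd(B), i.e., for every x ∈ X, bd(A ∪ B)(x) ≤ max(bd(A)(x), bd(B)(x)). -/
/-!
A closed set `K ⊇ A` realising `cl(A)` at a point exists because the closure is an infimum of
natural numbers. For the closure term, the union of such witnesses for `A` and `B` is closed
(its complement is the intersection of two open sets), so `cl(A ∪ B) ≤ cl(A) ∪ cl(B)`. For the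
complement term, `(A ∪ B)ᶜ` lies below both `Aᶜ` and `Bᶜ`, and closure is monotone. Combining
the two, `min (max a b) (min c d) ≤ max (min a c) (min b d)`.
-/

/-- M-complement of a sub-M-set: `Aᶜ = M ⊖ A` (pointwise truncated subtraction). -/
def mcompl {X : Type*} (M A : X → ℕ) : X → ℕ := fun x => M x - A x

structure IsMTopology {X : Type*} (M : X → ℕ) (τ : Set (X → ℕ)) : Prop where
  le_of_mem : ∀ N ∈ τ, N ≤ M
  top_mem : M ∈ τ
  zero_mem : (0 : X → ℕ) ∈ τ
  sSup_mem : ∀ S ⊆ τ, (fun x => sSup {n | ∃ N ∈ S, N x = n}) ∈ τ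
  min_mem : ∀ U ∈ τ, ∀ V ∈ τ, (fun x => min (U x) (V x)) ∈ τ

noncomputable def mint {X : Type*} (τ : Set (X → ℕ)) (A : X → ℕ) : X → ℕ :=
  fun x => sSup {n | ∃ G ∈ τ, G ≤ A ∧ G x = n}

noncomputable def mcl {X : Type*} (M : X → ℕ) (τ : Set (X → ℕ)) (A : X → ℕ) : X → ℕ :=
  fun x => sInf {n | ∃ K, mcompl M K ∈ τ ∧ A ≤ K ∧ K ≤ M ∧ K x = n}

noncomputable def mext {X : Type*} (M : X → ℕ) (τ : Set (X → ℕ)) (A : X → ℕ) : X → ℕ :=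
  mint τ (mcompl M A)

noncomputable def mbd {X : Type*} (M : X → ℕ) (τ : Set (X → ℕ)) (A : X → ℕ) : X → ℕ :=
  fun x => min (mcl M τ A x) (mcl M τ (mcompl M A) x)

def IsMClosed {X : Type*} (M : X → ℕ) (τ : Set (X → ℕ)) (K : X → ℕ) : Prop :=
  mcompl M K ∈ τ

section

variable {X : Type*} {M : X → ℕ} {τ : Set (X → ℕ)} {A B : X → ℕ}

lemma mcompl_self (M : X → ℕ) : mcompl M M = 0 := by
  funext x
  simp [mcompl]

lemma mcompl_le (M A : X → ℕ) : mcompl M A ≤ M := fun _ => Nat.sub_le _ _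

lemma mcompl_antitone (M : X → ℕ) : Antitone (mcompl M) :=
  fun _ _ h x => Nat.sub_le_sub_left (h x) _

lemma mcompl_sup (M A B : X → ℕ) : mcompl M (A ⊔ B) = mcompl M A ⊓ mcompl M B := by
  funext x
  simp only [mcompl, Pi.sup_apply, Pi.inf_apply]
  omega

lemma IsMTopology.isMClosed_self (hτ : IsMTopology M τ) : IsMClosed M τ M := by
  simpa [IsMClosed, mcompl_self] using hτ.zero_mem

lemma IsMTopology.isMClosed_sup (hτ : IsMTopology M τ) {K L : X → ℕ}
    (hK : IsMClosed M τ K) (hL : IsMClosed M τ L) : IsMClosed M τ (K ⊔ L) := by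
  rw [IsMClosed, mcompl_sup]
  exact hτ.min_mem _ hK _ hL

lemma mcl_le_of_isMClosed {K : X → ℕ} (hK : IsMClosed M τ K) (hAK : A ≤ K) (hKM : K ≤ M) :
    mcl M τ A ≤ K :=
  fun _ => Nat.sInf_le ⟨K, hK, hAK, hKM, rfl⟩

lemma IsMTopology.exists_isMClosed_mcl_eq (hτ : IsMTopology M τ) (hA : A ≤ M) (x : X) :
    ∃ K, IsMClosed M τ K ∧ A ≤ K ∧ K ≤ M ∧ K x = mcl M τ A x :=
  Nat.sInf_mem (s := {n | ∃ K, IsMClosed M τ K ∧ A ≤ K ∧ K ≤ M ∧ K x = n})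
    ⟨M x, M, hτ.isMClosed_self, hA, le_rfl, rfl⟩

lemma IsMTopology.mcl_mono (hτ : IsMTopology M τ) (hB : B ≤ M) (hAB : A ≤ B) :
    mcl M τ A ≤ mcl M τ B := by
  intro x
  obtain ⟨K, hK, hBK, hKM, hKx⟩ := hτ.exists_isMClosed_mcl_eq hB x
  rw [← hKx]
  exact mcl_le_of_isMClosed hK (hAB.trans hBK) hKM x

lemma IsMTopology.mcl_sup_le (hτ : IsMTopology M τ) (hA : A ≤ M) (hB : B ≤ M) :
    mcl M τ (A ⊔ B) ≤ mcl M τ A ⊔ mcl M τ B := by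
  intro x
  obtain ⟨K, hK, hAK, hKM, hKx⟩ := hτ.exists_isMClosed_mcl_eq hA x
  obtain ⟨L, hL, hBL, hLM, hLx⟩ := hτ.exists_isMClosed_mcl_eq hB x
  simpa only [Pi.sup_apply, hKx, hLx] using
    mcl_le_of_isMClosed (hτ.isMClosed_sup hK hL) (sup_le_sup hAK hBL) (sup_le hKM hLM) x

end

theorem bd_union_le {X : Type*} (M : X → ℕ) (τ : Set (X → ℕ)) (hτ : IsMTopology M τ)
    (A B : X → ℕ) (hA : A ≤ M) (hB : B ≤ M) :
    ∀ x, mbd M τ (fun y => max (A y) (B y)) x ≤ max (mbd M τ A x) (mbd M τ B x) := by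
  intro x
  have hcl : mcl M τ (A ⊔ B) x ≤ max (mcl M τ A x) (mcl M τ B x) := hτ.mcl_sup_le hA hB x
  have hclA : mcl M τ (mcompl M (A ⊔ B)) x ≤ mcl M τ (mcompl M A) x :=
    hτ.mcl_mono (mcompl_le M A) (mcompl_antitone M le_sup_left) x
  have hclB : mcl M τ (mcompl M (A ⊔ B)) x ≤ mcl M τ (mcompl M B) x :=
    hτ.mcl_mono (mcompl_le M B) (mcompl_antitone M le_sup_right) x
  change min (mcl M τ (A ⊔ B) x) (mcl M τ (mcompl M (A ⊔ B)) x) ≤ _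
  simp only [mbd]
  omega
end

section
/- Let τ be an M-topology on M : X → ℕ and let A, B : X → ℕ be sub-M-sets of M. Then the interior of the intersection equals the intersection of the interiors: int(A ∩ B) = int(A) ∩ int(B), i.e., for every x ∈ X, int(A ∩ B)(x) = min(int(A)(x), int(B)(x)). -/
section Interior

variable {X : Type*} {τ : Set (X → ℕ)}

lemma bddAbove_mint_set (A : X → ℕ) (x : X) :
    BddAbove {n | ∃ G ∈ τ, G ≤ A ∧ G x = n} := by
  refine ⟨A x, ?_⟩
  rintro _ ⟨G, -, hGA, rfl⟩
  exact hGA x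

lemma mint_le (A : X → ℕ) : mint τ A ≤ A := fun x =>
  csSup_le' (by rintro _ ⟨G, -, hGA, rfl⟩; exact hGA x)

lemma le_mint {A G : X → ℕ} (hG : G ∈ τ) (hGA : G ≤ A) : G ≤ mint τ A := fun x =>
  le_csSup (bddAbove_mint_set A x) ⟨G, hG, hGA, rfl⟩

lemma mint_mem {M : X → ℕ} (hτ : IsMTopology M τ) (A : X → ℕ) : mint τ A ∈ τ := by
  unfold mint
  have h := hτ.sSup_mem {G | G ∈ τ ∧ G ≤ A} fun _ hG => hG.1
  simpa only [Set.mem_ofPred_eq, and_assoc] using h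

lemma mint_mono {M : X → ℕ} (hτ : IsMTopology M τ) {A B : X → ℕ} (hAB : A ≤ B) :
    mint τ A ≤ mint τ B :=
  le_mint (mint_mem hτ A) ((mint_le A).trans hAB)

end Interior

theorem int_inter_general {X : Type*} (M : X → ℕ) (τ : Set (X → ℕ)) (hτ : IsMTopology M τ)
    (A B : X → ℕ) :
    ∀ x, mint τ (fun y => min (A y) (B y)) x = min (mint τ A x) (mint τ B x) := by
  intro x
  apply le_antisymm
  · exact le_min (mint_mono hτ (fun y => min_le_left _ _) x)
      (mint_mono hτ (fun y => min_le_right _ _) x)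
  · have hopen : (fun y => min (mint τ A y) (mint τ B y)) ∈ τ :=
      hτ.min_mem _ (mint_mem hτ A) _ (mint_mem hτ B)
    exact le_mint hopen (fun y => min_le_min (mint_le A y) (mint_le B y)) x

theorem int_inter {X : Type*} (M : X → ℕ) (τ : Set (X → ℕ)) (hτ : IsMTopology M τ)
    (A B : X → ℕ) (hA : A ≤ M) (hB : B ≤ M) :
    ∀ x, mint τ (fun y => min (A y) (B y)) x = min (mint τ A x) (mint τ B x) :=
  int_inter_general M τ hτ A B
end
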